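/- For every smooth complex-valued function f on (0,π)×ℝ the operator identity 𝓛₋₁†𝓛₀†𝓛₁†𝓛₂†𝓛₋₁𝓛₀𝓛₁𝓛₂ f = (𝓛₋₁†𝓛₂)²(𝓛₋₁†𝓛₂ − 2)² f holds at every point, where (𝓛₋₁†𝓛₂)² denotes the twofold iteration of the operator u ↦ 𝓛₋₁†(𝓛₂u) and (𝓛₋₁†𝓛₂ − 2)² the twofold iteration of u ↦ 𝓛₋₁†(𝓛₂u) − 2u. -/

import Mathlib

/- Spin-raising and spin-lowering operators on functions f(ϑ, φ) on (0,π) × ℝ. -/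

noncomputable section

open Filter Topology Set

namespace Ang

abbrev F2 : Type := ℝ → ℝ → ℂ

/-- `∂_ϑ`. -/
def dTh (f : F2) : F2 := fun ϑ φ => deriv (fun x => f x φ) ϑ
/-- `∂_φ`. -/
def dPh (f : F2) : F2 := fun ϑ φ => deriv (fun y => f ϑ y) φ

/-- `𝓛ₙ f = ∂_ϑ f + (i/sin ϑ)∂_φ f + n cot ϑ · f`. -/
def Lo (n : ℤ) (f : F2) : F2 := fun ϑ φ =>
  dTh f ϑ φ + Complex.I * (Real.sin ϑ : ℂ)⁻¹ * dPh f ϑ φ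
    + (n : ℂ) * ((Real.cos ϑ / Real.sin ϑ : ℝ) : ℂ) * f ϑ φ

/-- `𝓛ₙ† f = ∂_ϑ f − (i/sin ϑ)∂_φ f + n cot ϑ · f`. -/
def Ld (n : ℤ) (f : F2) : F2 := fun ϑ φ =>
  dTh f ϑ φ - Complex.I * (Real.sin ϑ : ℂ)⁻¹ * dPh f ϑ φ
    + (n : ℂ) * ((Real.cos ϑ / Real.sin ϑ : ℝ) : ℂ) * f ϑ φ

/-- `f` is smooth on `(0,π) × ℝ`. -/
def Smooth2 (f : F2) : Prop :=
  ContDiffOn ℝ (⊤ : ℕ∞) (fun p : ℝ × ℝ => f p.1 p.2)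
    (Set.Ioo 0 Real.pi ×ˢ (Set.univ : Set ℝ))

/-- The operator `u ↦ 𝓛₋₁†(𝓛₂ u)`. -/
def Bop (f : F2) : F2 := Ld (-1) (Lo 2 f)

/-- The operator `u ↦ 𝓛₋₁†(𝓛₂ u) − 2u`. -/
def BopM (f : F2) : F2 := fun ϑ φ => Bop f ϑ φ - 2 * f ϑ φ

/-!
Write `𝓛ₙ = ∂_ϑ + a csc ϑ ∂_φ + n cot ϑ` (`a = i`; `a = -i` gives `𝓛ₙ†`) and `Eₙ = 𝓛†₁₋ₙ 𝓛ₙ`.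
Expanding both sides to second order, using `∂_ϑ∂_φ = ∂_φ∂_ϑ` and `cot² = csc² - 1`, gives
`𝓛ₙ 𝓛†₁₋ₙ = 𝓛†₂₋ₙ 𝓛ₙ₋₁ + 2(n - 1)`, hence the intertwining relation
`(Eₙ₋₁ - c) 𝓛ₙ = 𝓛ₙ (Eₙ - c - 2(n - 1))`. Starting from the innermost pair `𝓛₂† 𝓛₋₁ = E₋₁`,
push the accumulated polynomial in `E` past the next `𝓛ₙ` and absorb `𝓛†₁₋ₙ 𝓛ₙ = Eₙ`; after three
rounds the left-hand side has become `E₂ (E₂ - 2)² E₂`, and polynomials in `E₂` commute.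
-/

open Function
open scoped ContDiff

def strip : Set (ℝ × ℝ) := Ioo 0 Real.pi ×ˢ univ

lemma isOpen_strip : IsOpen strip := isOpen_Ioo.prod isOpen_univ

def csc (ϑ : ℝ) : ℂ := (Real.sin ϑ : ℂ)⁻¹
def cot (ϑ : ℝ) : ℂ := ((Real.cos ϑ / Real.sin ϑ : ℝ) : ℂ)

section Coefficients

variable {ϑ : ℝ}

lemma csc_eq (ϑ : ℝ) : csc ϑ = (((Real.sin ϑ)⁻¹ : ℝ) : ℂ) := (Complex.ofReal_inv _).symm

lemma hasDerivAt_csc (hϑ : Real.sin ϑ ≠ 0) : HasDerivAt csc (-(cot ϑ * csc ϑ)) ϑ := by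
  have h := ((Real.hasDerivAt_sin ϑ).fun_inv hϑ).ofReal_comp
  convert h using 1
  · funext x; exact csc_eq x
  rw [cot, csc_eq, ← Complex.ofReal_mul, ← Complex.ofReal_neg]
  congr 1; field_simp

lemma hasDerivAt_cot (hϑ : Real.sin ϑ ≠ 0) : HasDerivAt cot (-(csc ϑ ^ 2)) ϑ := by
  have h := ((Real.hasDerivAt_cos ϑ).fun_div (Real.hasDerivAt_sin ϑ) hϑ).ofReal_comp
  convert h using 1
  · rfl
  rw [csc_eq, ← Complex.ofReal_pow, ← Complex.ofReal_neg]
  congr 1; field_simp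
  linear_combination Real.sin_sq_add_cos_sq ϑ

lemma cot_sq (hϑ : Real.sin ϑ ≠ 0) : cot ϑ ^ 2 = csc ϑ ^ 2 - 1 := by
  rw [cot, csc_eq]
  norm_cast
  field_simp
  linear_combination Real.sin_sq_add_cos_sq ϑ

lemma contDiffOn_csc : ContDiffOn ℝ ∞ (fun p : ℝ × ℝ => csc p.1) strip :=
  (Complex.ofRealCLM.contDiff.comp (Real.contDiff_sin.comp contDiff_fst)).contDiffOn.inv
    fun _ hp => Complex.ofReal_ne_zero.2 ((Real.sin_pos_of_mem_Ioo hp.1).ne')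

lemma contDiffOn_cot : ContDiffOn ℝ ∞ (fun p : ℝ × ℝ => cot p.1) strip :=
  Complex.ofRealCLM.contDiff.comp_contDiffOn
    ((Real.contDiff_cos.comp contDiff_fst).contDiffOn.div
      (Real.contDiff_sin.comp contDiff_fst).contDiffOn
      fun _ hp => (Real.sin_pos_of_mem_Ioo hp.1).ne')

end Coefficients

section Partials

variable {g : F2} {ϑ φ : ℝ}

lemma Smooth2.contDiffAt (hg : Smooth2 g) (hϑ : ϑ ∈ Ioo 0 Real.pi) :
    ContDiffAt ℝ ∞ (uncurry g) (ϑ, φ) :=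
  ContDiffOn.contDiffAt (s := strip) hg (isOpen_strip.mem_nhds ⟨hϑ, trivial⟩)

lemma Smooth2.differentiableAt (hg : Smooth2 g) (hϑ : ϑ ∈ Ioo 0 Real.pi) :
    DifferentiableAt ℝ (uncurry g) (ϑ, φ) :=
  (hg.contDiffAt hϑ).differentiableAt (by simp)

lemma Smooth2.hasDerivAt_fderiv_th (hg : Smooth2 g) (hϑ : ϑ ∈ Ioo 0 Real.pi) :
    HasDerivAt (fun x => g x φ) (fderiv ℝ (uncurry g) (ϑ, φ) (1, 0)) ϑ :=
  (hg.differentiableAt hϑ).hasFDerivAt.comp_hasDerivAt (f := fun x => (x, φ)) ϑ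
    ((hasDerivAt_id ϑ).prodMk (hasDerivAt_const ϑ φ))

lemma Smooth2.hasDerivAt_fderiv_ph (hg : Smooth2 g) (hϑ : ϑ ∈ Ioo 0 Real.pi) :
    HasDerivAt (fun y => g ϑ y) (fderiv ℝ (uncurry g) (ϑ, φ) (0, 1)) φ :=
  (hg.differentiableAt hϑ).hasFDerivAt.comp_hasDerivAt (f := fun y => (ϑ, y)) φ
    ((hasDerivAt_const φ ϑ).prodMk (hasDerivAt_id φ))

lemma Smooth2.dTh_eq_fderiv (hg : Smooth2 g) (hϑ : ϑ ∈ Ioo 0 Real.pi) :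
    dTh g ϑ φ = fderiv ℝ (uncurry g) (ϑ, φ) (1, 0) :=
  (hg.hasDerivAt_fderiv_th hϑ).deriv

lemma Smooth2.dPh_eq_fderiv (hg : Smooth2 g) (hϑ : ϑ ∈ Ioo 0 Real.pi) :
    dPh g ϑ φ = fderiv ℝ (uncurry g) (ϑ, φ) (0, 1) :=
  (hg.hasDerivAt_fderiv_ph hϑ).deriv

lemma Smooth2.hasDerivAt_dTh (hg : Smooth2 g) (hϑ : ϑ ∈ Ioo 0 Real.pi) :
    HasDerivAt (fun x => g x φ) (dTh g ϑ φ) ϑ :=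
  hg.dTh_eq_fderiv hϑ ▸ hg.hasDerivAt_fderiv_th hϑ

lemma Smooth2.hasDerivAt_dPh (hg : Smooth2 g) (hϑ : ϑ ∈ Ioo 0 Real.pi) :
    HasDerivAt (fun y => g ϑ y) (dPh g ϑ φ) φ :=
  hg.dPh_eq_fderiv hϑ ▸ hg.hasDerivAt_fderiv_ph hϑ

lemma Smooth2.contDiffOn_fderiv (hg : Smooth2 g) :
    ContDiffOn ℝ ∞ (fderiv ℝ (uncurry g)) strip :=
  ContDiffOn.fderiv_of_isOpen (s := strip) hg isOpen_strip (by simp)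

lemma Smooth2.smooth2_dTh (hg : Smooth2 g) : Smooth2 (dTh g) :=
  (hg.contDiffOn_fderiv.clm_apply contDiffOn_const).congr fun _ hp => hg.dTh_eq_fderiv hp.1

lemma Smooth2.smooth2_dPh (hg : Smooth2 g) : Smooth2 (dPh g) :=
  (hg.contDiffOn_fderiv.clm_apply contDiffOn_const).congr fun _ hp => hg.dPh_eq_fderiv hp.1

lemma Smooth2.dTh_dPh (hg : Smooth2 g) (hϑ : ϑ ∈ Ioo 0 Real.pi) :
    dTh (dPh g) ϑ φ = dPh (dTh g) ϑ φ := by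
  have hnhds : strip ∈ 𝓝 (ϑ, φ) := isOpen_strip.mem_nhds ⟨hϑ, trivial⟩
  have hD : DifferentiableAt ℝ (fderiv ℝ (uncurry g)) (ϑ, φ) :=
    (hg.contDiffOn_fderiv.contDiffAt hnhds).differentiableAt (by simp)
  have hTh : uncurry (dTh g) =ᶠ[𝓝 (ϑ, φ)] fun p => fderiv ℝ (uncurry g) p (1, 0) :=
    eventually_of_mem hnhds fun p hp => hg.dTh_eq_fderiv hp.1
  have hPh : uncurry (dPh g) =ᶠ[𝓝 (ϑ, φ)] fun p => fderiv ℝ (uncurry g) p (0, 1) :=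
    eventually_of_mem hnhds fun p hp => hg.dPh_eq_fderiv hp.1
  rw [hg.smooth2_dPh.dTh_eq_fderiv hϑ, hg.smooth2_dTh.dPh_eq_fderiv hϑ, hTh.fderiv_eq,
    hPh.fderiv_eq, fderiv_clm_apply hD (differentiableAt_const _),
    fderiv_clm_apply hD (differentiableAt_const _)]
  simpa using (hg.contDiffAt hϑ).isSymmSndFDerivAt (by simpa using ENat.LEInfty.out) (1, 0) (0, 1)

end Partials

def StripEq (g h : F2) : Prop := EqOn (uncurry g) (uncurry h) strip

infix:50 " =ₛ " => StripEq

lemma StripEq.trans {g h k : F2} (hgh : g =ₛ h) (hhk : h =ₛ k) : g =ₛ k := EqOn.trans hgh hhk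

instance : Trans StripEq StripEq StripEq := ⟨StripEq.trans⟩

def ladder (a n : ℂ) (g : F2) : F2 := fun ϑ φ =>
  dTh g ϑ φ + a * csc ϑ * dPh g ϑ φ + n * cot ϑ * g ϑ φ

lemma Lo_eq_ladder (n : ℤ) : Lo n = ladder Complex.I n := rfl

lemma Ld_eq_ladder (n : ℤ) : Ld n = ladder (-Complex.I) n := by
  funext g ϑ φ
  simp only [Ld, ladder, csc, cot]
  ring

section Ladder

variable {a b m n : ℂ} {g h : F2} {ϑ φ : ℝ}

lemma Smooth2.sub_smul (hg : Smooth2 g) (hh : Smooth2 h) (c : ℂ) : Smooth2 (g - c • h) :=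
  ContDiffOn.sub (s := strip) hg (ContDiffOn.const_smul (s := strip) c hh)

lemma Smooth2.smooth2_ladder (hg : Smooth2 g) (a n : ℂ) : Smooth2 (ladder a n g) :=
  (hg.smooth2_dTh.add ((contDiffOn_const.mul contDiffOn_csc).mul hg.smooth2_dPh)).add
    ((contDiffOn_const.mul contDiffOn_cot).mul hg)

lemma ladder_congr (hgh : g =ₛ h) : ladder a n g =ₛ ladder a n h := by
  rintro ⟨ϑ, φ⟩ ⟨hϑ, -⟩
  have hTh : (fun x => g x φ) =ᶠ[𝓝 ϑ] fun x => h x φ :=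
    eventually_of_mem (isOpen_Ioo.mem_nhds hϑ) fun x hx =>
      hgh (show (x, φ) ∈ strip from ⟨hx, trivial⟩)
  have hPh : (fun y => g ϑ y) = fun y => h ϑ y :=
    funext fun y => hgh (show (ϑ, y) ∈ strip from ⟨hϑ, trivial⟩)
  simp only [uncurry, ladder, dTh, dPh, hTh.deriv_eq, hPh]

lemma Smooth2.ladder_sub_smul (hg : Smooth2 g) (hh : Smooth2 h) (c : ℂ) :
    ladder a n (g - c • h) =ₛ ladder a n g - c • ladder a n h := by
  rintro ⟨ϑ, φ⟩ ⟨hϑ, -⟩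
  have hTh : dTh (g - c • h) ϑ φ = dTh g ϑ φ - c * dTh h ϑ φ :=
    ((hg.hasDerivAt_dTh hϑ).sub ((hh.hasDerivAt_dTh hϑ).const_mul c)).deriv
  have hPh : dPh (g - c • h) ϑ φ = dPh g ϑ φ - c * dPh h ϑ φ :=
    ((hg.hasDerivAt_dPh hϑ).sub ((hh.hasDerivAt_dPh hϑ).const_mul c)).deriv
  simp only [uncurry, ladder, hTh, hPh, Pi.sub_apply, Pi.smul_apply, smul_eq_mul]
  ring

lemma Smooth2.hasDerivAt_ladder_th (hg : Smooth2 g) (hϑ : ϑ ∈ Ioo 0 Real.pi) :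
    HasDerivAt (fun x => ladder b n g x φ)
      (dTh (dTh g) ϑ φ + b * (-(cot ϑ * csc ϑ) * dPh g ϑ φ + csc ϑ * dTh (dPh g) ϑ φ)
        + n * (-(csc ϑ ^ 2) * g ϑ φ + cot ϑ * dTh g ϑ φ)) ϑ := by
  have hs := (Real.sin_pos_of_mem_Ioo hϑ).ne'
  refine (((hg.smooth2_dTh.hasDerivAt_dTh (φ := φ) hϑ).fun_add
    (((hasDerivAt_csc hs).const_mul b).fun_mul (hg.smooth2_dPh.hasDerivAt_dTh hϑ))).fun_add
    (((hasDerivAt_cot hs).const_mul n).fun_mul (hg.hasDerivAt_dTh hϑ))).congr_deriv ?_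
  ring

lemma Smooth2.hasDerivAt_ladder_ph (hg : Smooth2 g) (hϑ : ϑ ∈ Ioo 0 Real.pi) :
    HasDerivAt (fun y => ladder b n g ϑ y)
      (dPh (dTh g) ϑ φ + b * csc ϑ * dPh (dPh g) ϑ φ + n * cot ϑ * dPh g ϑ φ) φ :=
  ((hg.smooth2_dTh.hasDerivAt_dPh hϑ).fun_add
    ((hg.smooth2_dPh.hasDerivAt_dPh hϑ).const_mul _)).fun_add ((hg.hasDerivAt_dPh hϑ).const_mul _)

lemma Smooth2.ladder_ladder_apply (hg : Smooth2 g) (hϑ : ϑ ∈ Ioo 0 Real.pi) :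
    ladder a m (ladder b n g) ϑ φ = dTh (dTh g) ϑ φ + (a + b) * csc ϑ * dTh (dPh g) ϑ φ
      + (m + n) * cot ϑ * dTh g ϑ φ + a * b * csc ϑ ^ 2 * dPh (dPh g) ϑ φ
      + (a * n + b * m - b) * cot ϑ * csc ϑ * dPh g ϑ φ
      + n * (m * cot ϑ ^ 2 - csc ϑ ^ 2) * g ϑ φ := by
  have hTh : dTh (ladder b n g) ϑ φ = _ := (hg.hasDerivAt_ladder_th hϑ).deriv
  have hPh : dPh (ladder b n g) ϑ φ = _ := (hg.hasDerivAt_ladder_ph hϑ).deriv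
  rw [ladder, hTh, hPh, ← hg.dTh_dPh hϑ, ladder]
  ring

lemma Smooth2.ladder_comm (hg : Smooth2 g) :
    ladder a n (ladder (-a) (1 - n) g) =ₛ
      ladder (-a) (2 - n) (ladder a (n - 1) g) + (2 * (n - 1)) • g := by
  rintro ⟨ϑ, φ⟩ ⟨hϑ, -⟩
  simp only [uncurry, Pi.add_apply, Pi.smul_apply, smul_eq_mul, hg.ladder_ladder_apply hϑ]
  linear_combination -2 * (n - 1) * g ϑ φ * cot_sq ((Real.sin_pos_of_mem_Ioo hϑ).ne')

end Ladder

def spinLaplacian (a n c : ℂ) (g : F2) : F2 := ladder (-a) (1 - n) (ladder a n g) - c • g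

lemma spinLaplacian_zero (a n : ℂ) (g : F2) :
    spinLaplacian a n 0 g = ladder (-a) (1 - n) (ladder a n g) := by
  simp [spinLaplacian]

section SpinLaplacian

variable {a m n c d : ℂ} {g h : F2}

lemma Smooth2.smooth2_spinLaplacian (hg : Smooth2 g) (a n c : ℂ) :
    Smooth2 (spinLaplacian a n c g) :=
  ((hg.smooth2_ladder a n).smooth2_ladder (-a) (1 - n)).sub_smul hg c

lemma spinLaplacian_congr (hgh : g =ₛ h) : spinLaplacian a n c g =ₛ spinLaplacian a n c h := by
  intro p hp
  have hM := ladder_congr (a := -a) (n := 1 - n) (ladder_congr (a := a) (n := n) hgh) hp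
  have hp' := hgh hp
  simp only [spinLaplacian, uncurry, Pi.sub_apply, Pi.smul_apply] at hM hp' ⊢
  rw [hM, hp']

lemma Smooth2.spinLaplacian_sub_smul (hg : Smooth2 g) (hh : Smooth2 h) (e : ℂ) :
    spinLaplacian a n c (g - e • h) =ₛ spinLaplacian a n c g - e • spinLaplacian a n c h := by
  intro p hp
  have hLg : Smooth2 (ladder a n g) := hg.smooth2_ladder a n
  have hLh : Smooth2 (ladder a n h) := hh.smooth2_ladder a n
  have hM := (ladder_congr (a := -a) (n := 1 - n) (hg.ladder_sub_smul hh e)).trans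
    (hLg.ladder_sub_smul hLh e) hp
  simp only [spinLaplacian, uncurry, Pi.sub_apply, Pi.smul_apply, smul_eq_mul] at hM ⊢
  rw [hM]
  ring

lemma Smooth2.spinLaplacian_comm (hg : Smooth2 g) :
    spinLaplacian a n c (spinLaplacian a n d g) =ₛ
      spinLaplacian a n d (spinLaplacian a n c g) := by
  intro p hp
  have hE : Smooth2 (ladder (-a) (1 - n) (ladder a n g)) :=
    (hg.smooth2_ladder a n).smooth2_ladder (-a) (1 - n)
  have hc := hE.spinLaplacian_sub_smul (a := a) (n := n) (c := c) hg d hp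
  have hd := hE.spinLaplacian_sub_smul (a := a) (n := n) (c := d) hg c hp
  simp only [spinLaplacian, uncurry, Pi.sub_apply, Pi.smul_apply, smul_eq_mul] at hc hd ⊢
  rw [hc, hd]
  ring

lemma Smooth2.spinLaplacian_ladder (hg : Smooth2 g) (hmn : m + 1 = n) (hcd : d = c + 2 * m) :
    spinLaplacian a m c (ladder a n g) =ₛ ladder a n (spinLaplacian a n d g) := by
  subst hmn hcd
  intro p hp
  have hL : Smooth2 (ladder a (m + 1) g) := hg.smooth2_ladder a (m + 1)
  have hE := hL.smooth2_ladder (-a) (1 - (m + 1))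
  have hcomm := hL.ladder_comm (a := a) (n := m + 1) hp
  have hlin := hE.ladder_sub_smul (a := a) (n := m + 1) hg (c + 2 * m) hp
  simp only [spinLaplacian, uncurry, Pi.sub_apply, Pi.add_apply, Pi.smul_apply,
    smul_eq_mul, add_sub_cancel_right] at hcomm hlin ⊢
  rw [hlin, hcomm, show (2 : ℂ) - (m + 1) = 1 - m by ring]
  ring

end SpinLaplacian

section Tower

variable {a : ℂ} {f g : F2}

lemma Smooth2.ladder_tower_inner (hg : Smooth2 g) :
    ladder (-a) 1 (ladder (-a) 2 (ladder a (-1) (ladder a 0 (ladder a 1 g)))) =ₛ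
      ladder a 1 (spinLaplacian a 1 0 (spinLaplacian a 1 (-2) g)) :=
  calc _ = ladder (-a) 1 (spinLaplacian a (-1) 0 (ladder a 0 (ladder a 1 g))) := by
        norm_num [spinLaplacian_zero]
    _ =ₛ ladder (-a) 1 (ladder a 0 (spinLaplacian a 0 (-2) (ladder a 1 g))) :=
        ladder_congr ((hg.smooth2_ladder a 1).spinLaplacian_ladder (by norm_num) (by norm_num))
    _ = spinLaplacian a 0 0 (spinLaplacian a 0 (-2) (ladder a 1 g)) := by
        norm_num [spinLaplacian_zero]
    _ =ₛ spinLaplacian a 0 0 (ladder a 1 (spinLaplacian a 1 (-2) g)) :=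
        spinLaplacian_congr (hg.spinLaplacian_ladder (by norm_num) (by norm_num))
    _ =ₛ _ := (hg.smooth2_spinLaplacian a 1 (-2)).spinLaplacian_ladder (by norm_num) (by norm_num)

lemma Smooth2.ladder_tower (hf : Smooth2 f) :
    ladder (-a) (-1) (ladder (-a) 0 (ladder (-a) 1 (ladder (-a) 2
      (ladder a (-1) (ladder a 0 (ladder a 1 (ladder a 2 f))))))) =ₛ
    spinLaplacian a 2 0 (spinLaplacian a 2 2 (spinLaplacian a 2 2 (spinLaplacian a 2 0 f))) :=
  have hC := hf.smooth2_spinLaplacian a 2 0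
  calc _ =ₛ ladder (-a) (-1) (ladder (-a) 0 (ladder a 1
          (spinLaplacian a 1 0 (spinLaplacian a 1 (-2) (ladder a 2 f))))) :=
        ladder_congr (ladder_congr (hf.smooth2_ladder a 2).ladder_tower_inner)
    _ = ladder (-a) (-1) (spinLaplacian a 1 0 (spinLaplacian a 1 0
          (spinLaplacian a 1 (-2) (ladder a 2 f)))) := by
        norm_num [spinLaplacian_zero]
    _ =ₛ ladder (-a) (-1) (spinLaplacian a 1 0 (spinLaplacian a 1 0
          (ladder a 2 (spinLaplacian a 2 0 f)))) :=
        ladder_congr (spinLaplacian_congr (spinLaplacian_congr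
          (hf.spinLaplacian_ladder (by norm_num) (by norm_num))))
    _ =ₛ ladder (-a) (-1) (spinLaplacian a 1 0
          (ladder a 2 (spinLaplacian a 2 2 (spinLaplacian a 2 0 f)))) :=
        ladder_congr (spinLaplacian_congr (hC.spinLaplacian_ladder (by norm_num) (by norm_num)))
    _ =ₛ ladder (-a) (-1) (ladder a 2
          (spinLaplacian a 2 2 (spinLaplacian a 2 2 (spinLaplacian a 2 0 f)))) :=
        ladder_congr ((hC.smooth2_spinLaplacian a 2 2).spinLaplacian_ladder
          (by norm_num) (by norm_num))
    _ = _ := by norm_num [spinLaplacian_zero]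

end Tower

lemma Bop_eq_spinLaplacian : Bop = spinLaplacian Complex.I 2 0 := by
  funext g
  norm_num [Bop, spinLaplacian_zero, Lo_eq_ladder, Ld_eq_ladder]

lemma BopM_eq_spinLaplacian : BopM = spinLaplacian Complex.I 2 2 := by
  funext g ϑ φ
  rw [BopM, Bop_eq_spinLaplacian, spinLaplacian_zero, spinLaplacian]
  norm_num

/-- The operator identity
`𝓛₋₁†𝓛₀†𝓛₁†𝓛₂†𝓛₋₁𝓛₀𝓛₁𝓛₂ f = (𝓛₋₁†𝓛₂)²(𝓛₋₁†𝓛₂ − 2)² f`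
at every point of `(0,π) × ℝ`. -/
theorem statement12 (f : F2) (hf : Smooth2 f) :
    ∀ ϑ ∈ Set.Ioo (0 : ℝ) Real.pi, ∀ φ : ℝ,
      Ld (-1) (Ld 0 (Ld 1 (Ld 2 (Lo (-1) (Lo 0 (Lo 1 (Lo 2 f))))))) ϑ φ
        = Bop (Bop (BopM (BopM f))) ϑ φ := by
  have key : Ld (-1) (Ld 0 (Ld 1 (Ld 2 (Lo (-1) (Lo 0 (Lo 1 (Lo 2 f))))))) =ₛ
      Bop (Bop (BopM (BopM f))) := by
    rw [Bop_eq_spinLaplacian, BopM_eq_spinLaplacian]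
    calc _ = ladder (-Complex.I) (-1) (ladder (-Complex.I) 0 (ladder (-Complex.I) 1
          (ladder (-Complex.I) 2 (ladder Complex.I (-1) (ladder Complex.I 0
            (ladder Complex.I 1 (ladder Complex.I 2 f))))))) := by
          simp only [Lo_eq_ladder, Ld_eq_ladder]; push_cast; rfl
      _ =ₛ _ := hf.ladder_tower
      _ =ₛ _ := spinLaplacian_congr (spinLaplacian_congr hf.spinLaplacian_comm)
      _ =ₛ _ := spinLaplacian_congr (hf.smooth2_spinLaplacian _ 2 2).spinLaplacian_comm
  intro ϑ hϑ φ
  simpa only [uncurry_apply_pair] using key (show (ϑ, φ) ∈ strip from ⟨hϑ, trivial⟩)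

end Ang
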